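/- Let η^mono: ℝ^N → ℝ^N be the Euclidean projection onto the cone M_N = {x ∈ ℝ^N : x_t ≤ x_{t+1} for all 1 ≤ t ≤ N−1}, R_N(μ) = E ‖η^mono(μ + Z) − μ‖₂² with Z ∼ N(0, I_N), and r(ℓ) = E ‖η^mono(W)‖₂² for W ∼ N(0, I_ℓ) (the risk at zero in dimension ℓ). For μ ∈ M_N, let I₊(μ) = {i ∈ {1,…,N−1} : μ_i < μ_{i+1}} = {i₁ < i₂ < ⋯ < i_{K(μ)}} be its increase points and set J_k = {i_k + 1, …, i_{k+1}} for k = 0, 1, …, K(μ), with the conventions i₀ = 0 and i_{K(μ)+1} = N. Then lim_{t→∞} R_N(tμ) = Σ_{k=0}^{K(μ)} r(|J_k|). -/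

import Mathlib

open MeasureTheory ProbabilityTheory ENNReal Filter

noncomputable section

/-- The standard Gaussian measure `N(0, I_N)` on `ℝ^N`. -/
def stdGaussian (N : ℕ) : Measure (Fin N → ℝ) :=
  Measure.pi fun _ => gaussianReal 0 1

/-- The cone `M_N` of nondecreasing sequences in `ℝ^N`. -/
def monoCone (N : ℕ) : Set (Fin N → ℝ) := {x | Monotone x}

section
variable (η : ∀ ℓ : ℕ, (Fin ℓ → ℝ) → (Fin ℓ → ℝ))

/-- The risk at zero of monotone regression in dimension `ℓ`,
`r(ℓ) = E ‖η^mono(W)‖₂²`, `W ∼ N(0, I_ℓ)`. -/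
def riskAtZero (ℓ : ℕ) : ℝ≥0∞ :=
  ∫⁻ w, ENNReal.ofReal (∑ i, (η ℓ w i) ^ 2) ∂(stdGaussian ℓ)

end

/-!
For large `t` the level sets of `μ` are pushed apart by gaps growing linearly in `t`, so the
projection of `t • μ + z` onto the monotone cone decouples along them: eventually
`η N (t • μ + z) = t • μ + w z`, where `w z` projects the restriction of `z` to each level set
separately (by uniqueness of nearest points in a convex set, it suffices that this candidate is
monotone and optimal on each block). Since `t • μ` lies in the cone, `‖η N (t • μ + z) - t • μ‖²`
is dominated by `4 ‖z‖²`, and dominated convergence gives the limit `E ‖w Z‖²`. The restriction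
of `Z` to a level set of size `ℓ` is standard Gaussian in `ℝ^ℓ`, so each block contributes `r(ℓ)`.
-/

def IsNearestPoint {ι : Type*} [Fintype ι] (K : Set (ι → ℝ)) (y p : ι → ℝ) : Prop :=
  p ∈ K ∧ ∀ x ∈ K, ∑ i, (y i - p i) ^ 2 ≤ ∑ i, (y i - x i) ^ 2

namespace IsNearestPoint

variable {ι : Type*} [Fintype ι] {K : Set (ι → ℝ)} {y p q x : ι → ℝ}

/-- By the parallelogram law, the midpoint of two nearest points would be strictly nearer. -/
theorem unique (hK : Convex ℝ K) (hp : IsNearestPoint K y p) (hq : IsNearestPoint K y q) :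
    p = q := by
  have hmid : (2⁻¹ : ℝ) • p + (2⁻¹ : ℝ) • q ∈ K :=
    hK hp.1 hq.1 (by norm_num) (by norm_num) (by norm_num)
  have hpar : ∑ i, (y i - ((2⁻¹ : ℝ) • p + (2⁻¹ : ℝ) • q) i) ^ 2
      = (∑ i, (y i - p i) ^ 2 + ∑ i, (y i - q i) ^ 2) / 2 - (∑ i, (p i - q i) ^ 2) / 4 := by
    simp only [Pi.add_apply, Pi.smul_apply, smul_eq_mul, Finset.sum_div, ← Finset.sum_add_distrib,
      ← Finset.sum_sub_distrib]
    exact Finset.sum_congr rfl fun i _ => by ring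
  have hsum : ∑ i, (p i - q i) ^ 2 = 0 :=
    le_antisymm (by linarith [hp.2 _ hmid, hp.2 q hq.1, hq.2 p hp.1])
      (Finset.sum_nonneg fun i _ => sq_nonneg _)
  funext i
  have := (Finset.sum_eq_zero_iff_of_nonneg fun i _ => sq_nonneg (p i - q i)).mp hsum i
    (Finset.mem_univ i)
  exact sub_eq_zero.mp (pow_eq_zero_iff two_ne_zero |>.mp this)

theorem sum_sq_sub_le (hp : IsNearestPoint K y p) (hx : x ∈ K) :
    ∑ i, (p i - x i) ^ 2 ≤ 4 * ∑ i, (y i - x i) ^ 2 := by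
  have htri : ∑ i, (p i - x i) ^ 2 ≤ 2 * ∑ i, (y i - p i) ^ 2 + 2 * ∑ i, (y i - x i) ^ 2 := by
    rw [Finset.mul_sum, Finset.mul_sum, ← Finset.sum_add_distrib]
    exact Finset.sum_le_sum fun i _ => by nlinarith [sq_nonneg (p i + x i - 2 * y i)]
  linarith [hp.2 x hx]

end IsNearestPoint

theorem convex_monoCone (N : ℕ) : Convex ℝ (monoCone N) := by
  intro x hx y hy a b ha hb _ i j hij
  simp only [Pi.add_apply, Pi.smul_apply, smul_eq_mul]
  exact add_le_add (mul_le_mul_of_nonneg_left (hx hij) ha) (mul_le_mul_of_nonneg_left (hy hij) hb)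

theorem smul_mem_monoCone {N : ℕ} {μ : Fin N → ℝ} (hμ : μ ∈ monoCone N) {t : ℝ} (ht : 0 ≤ t) :
    t • μ ∈ monoCone N :=
  fun _ _ hij => mul_le_mul_of_nonneg_left (hμ hij) ht

theorem measurePreserving_stdGaussian_comp_equiv {N ℓ : ℕ} (s : Finset (Fin N))
    (e : Fin ℓ ≃ s) :
    MeasurePreserving (fun (z : Fin N → ℝ) j => z (e j)) (stdGaussian N) (stdGaussian ℓ) := by
  have hrestrict : MeasurePreserving s.restrict (stdGaussian N)
      (Measure.pi fun _ : s => gaussianReal 0 1) :=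
    ⟨Finset.measurable_restrict s, by
      rw [_root_.stdGaussian, ← Measure.infinitePi_eq_pi, Measure.infinitePi_map_restrict]⟩
  exact (measurePreserving_piCongrLeft (fun _ => gaussianReal 0 1) e).symm.comp hrestrict

theorem integrable_sum_sq_stdGaussian (N : ℕ) :
    Integrable (fun z : Fin N → ℝ => ∑ i, z i ^ 2) (stdGaussian N) :=
  integrable_finsetSum _ fun i _ =>
    (measurePreserving_eval (fun _ => gaussianReal 0 1) i).integrable_comp_of_integrable
      ((memLp_id_gaussianReal 2).integrable_sq)

section Fibers

variable {N : ℕ} (μ : Fin N → ℝ)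

def fiber (v : ℝ) : Finset (Fin N) := Finset.univ.filter fun i => μ i = v

def fiberEquiv (v : ℝ) : Fin (fiber μ v).card ≃o fiber μ v := (fiber μ v).orderIsoOfFin rfl

def restrictFiber (v : ℝ) (z : Fin N → ℝ) : Fin (fiber μ v).card → ℝ :=
  fun j => z (fiberEquiv μ v j)

theorem mem_fiber {v : ℝ} {i : Fin N} : i ∈ fiber μ v ↔ μ i = v := by
  simp [fiber]

theorem apply_fiberEquiv (v : ℝ) (j : Fin (fiber μ v).card) : μ (fiberEquiv μ v j) = v :=
  (mem_fiber μ).mp (fiberEquiv μ v j).2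

theorem sum_eq_sum_sum_fiberEquiv (f : Fin N → ℝ) :
    ∑ i, f i = ∑ v ∈ Finset.univ.image μ, ∑ j, f (fiberEquiv μ v j) := by
  rw [← Finset.sum_fiberwise_of_maps_to (g := μ) fun i _ =>
    Finset.mem_image_of_mem μ (Finset.mem_univ i)]
  refine Finset.sum_congr rfl fun v _ => ?_
  rw [← Finset.sum_coe_sort]
  exact (Fintype.sum_equiv (fiberEquiv μ v).toEquiv _ _ fun _ => rfl).symm

/-- The eventual value of `η N (t • μ + z) - t • μ`: `η` applied separately on each fiber of `μ`. -/
def blockProj (η : ∀ ℓ : ℕ, (Fin ℓ → ℝ) → (Fin ℓ → ℝ)) (z : Fin N → ℝ) (i : Fin N) : ℝ :=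
  η _ (restrictFiber μ (μ i) z) ((fiberEquiv μ (μ i)).symm ⟨i, (mem_fiber μ).mpr rfl⟩)

variable {μ} (η : ∀ ℓ : ℕ, (Fin ℓ → ℝ) → (Fin ℓ → ℝ)) (z : Fin N → ℝ)

theorem blockProj_of_mem_fiber {v : ℝ} {i : Fin N} (hi : i ∈ fiber μ v) :
    blockProj μ η z i = η _ (restrictFiber μ v z) ((fiberEquiv μ v).symm ⟨i, hi⟩) := by
  obtain rfl := (mem_fiber μ).mp hi
  rfl

theorem blockProj_fiberEquiv (v : ℝ) (j : Fin (fiber μ v).card) :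
    blockProj μ η z (fiberEquiv μ v j) = η _ (restrictFiber μ v z) j := by
  rw [blockProj_of_mem_fiber η z (fiberEquiv μ v j).2, Subtype.coe_eta, OrderIso.symm_apply_apply]

theorem blockProj_le_of_le (hη : ∀ ℓ y, η ℓ y ∈ monoCone ℓ) {i j : Fin N} (hij : i ≤ j)
    (hμij : μ i = μ j) : blockProj μ η z i ≤ blockProj μ η z j := by
  have hj : j ∈ fiber μ (μ i) := (mem_fiber μ).mpr hμij.symm
  rw [blockProj_of_mem_fiber η z ((mem_fiber μ).mpr rfl), blockProj_of_mem_fiber η z hj]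
  exact hη _ _ ((fiberEquiv μ (μ i)).symm.monotone hij)

theorem eventually_smul_add_blockProj_mem_monoCone (hη : ∀ ℓ y, η ℓ y ∈ monoCone ℓ)
    (hμ : μ ∈ monoCone N) : ∀ᶠ t : ℝ in atTop, t • μ + blockProj μ η z ∈ monoCone N := by
  have hpair : ∀ i j : Fin N, ∀ᶠ t : ℝ in atTop,
      i ≤ j → t * μ i + blockProj μ η z i ≤ t * μ j + blockProj μ η z j := by
    intro i j
    by_cases hμij : μ i = μ j
    · refine .of_forall fun t hij => ?_
      rw [hμij]
      exact add_le_add_right (blockProj_le_of_le η z hη hij hμij) _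
    filter_upwards [eventually_ge_atTop ((blockProj μ η z i - blockProj μ η z j) / (μ j - μ i))]
      with t ht hij
    have hlt : 0 < μ j - μ i := sub_pos.mpr (lt_of_le_of_ne (hμ hij) hμij)
    nlinarith [(div_le_iff₀ hlt).mp ht]
  filter_upwards [eventually_all.mpr fun i => eventually_all.mpr (hpair i)] with t ht i j hij
  exact ht i j hij

/-- Optimality is checked fiber by fiber: on the fiber over `v`, a competitor `x ∈ monoCone N`
restricts, after subtracting the constant `t * v`, to a competitor in the smaller cone. -/
theorem isNearestPoint_smul_add_blockProj
    (hproj : ∀ ℓ y, IsNearestPoint (monoCone ℓ) y (η ℓ y)) {t : ℝ}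
    (hmono : t • μ + blockProj μ η z ∈ monoCone N) :
    IsNearestPoint (monoCone N) (t • μ + z) (t • μ + blockProj μ η z) := by
  refine ⟨hmono, fun x hx => ?_⟩
  have hrestr (v : ℝ) : (fun j => x (fiberEquiv μ v j) - t * v) ∈ monoCone _ :=
    fun a b hab => sub_le_sub_right (hx ((fiberEquiv μ v).monotone hab)) _
  simp only [Pi.add_apply, Pi.smul_apply, smul_eq_mul, add_sub_add_left_eq_sub]
  rw [sum_eq_sum_sum_fiberEquiv μ, sum_eq_sum_sum_fiberEquiv μ]
  refine Finset.sum_le_sum fun v _ => ?_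
  calc ∑ j, (z (fiberEquiv μ v j) - blockProj μ η z (fiberEquiv μ v j)) ^ 2
      = ∑ j, (restrictFiber μ v z j - η _ (restrictFiber μ v z) j) ^ 2 := by
        simp only [blockProj_fiberEquiv, restrictFiber]
    _ ≤ ∑ j, (restrictFiber μ v z j - (x (fiberEquiv μ v j) - t * v)) ^ 2 :=
        (hproj _ (restrictFiber μ v z)).2 _ (hrestr v)
    _ = _ := Finset.sum_congr rfl fun j _ => by
        rw [apply_fiberEquiv μ v j, restrictFiber]
        ring

theorem eventually_proj_smul_add_eq (hproj : ∀ ℓ y, IsNearestPoint (monoCone ℓ) y (η ℓ y))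
    (hμ : μ ∈ monoCone N) :
    ∀ᶠ t : ℝ in atTop, η N (t • μ + z) = t • μ + blockProj μ η z := by
  filter_upwards [eventually_smul_add_blockProj_mem_monoCone η z (fun ℓ y => (hproj ℓ y).1) hμ]
    with t ht
  exact (hproj N _).unique (convex_monoCone N) (isNearestPoint_smul_add_blockProj η z hproj ht)

end Fibers

theorem lintegral_sum_sq_blockProj {N : ℕ} (μ : Fin N → ℝ)
    (η : ∀ ℓ : ℕ, (Fin ℓ → ℝ) → (Fin ℓ → ℝ)) (hmeas : ∀ ℓ, Measurable (η ℓ)) :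
    ∫⁻ z, ENNReal.ofReal (∑ i, blockProj μ η z i ^ 2) ∂(stdGaussian N)
      = ∑ v ∈ Finset.univ.image μ, riskAtZero η (fiber μ v).card := by
  have hsq (ℓ : ℕ) : Measurable fun w : Fin ℓ → ℝ => ENNReal.ofReal (∑ i, η ℓ w i ^ 2) := by
    fun_prop
  have hsplit (z : Fin N → ℝ) : ENNReal.ofReal (∑ i, blockProj μ η z i ^ 2)
      = ∑ v ∈ Finset.univ.image μ, ENNReal.ofReal (∑ j, η _ (restrictFiber μ v z) j ^ 2) := by
    rw [sum_eq_sum_sum_fiberEquiv μ, ENNReal.ofReal_sum_of_nonneg fun v _ => by positivity]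
    simp only [blockProj_fiberEquiv]
  have hrestr (v : ℝ) :
      MeasurePreserving (restrictFiber μ v) (stdGaussian N) (stdGaussian (fiber μ v).card) :=
    measurePreserving_stdGaussian_comp_equiv _ (fiberEquiv μ v).toEquiv
  rw [lintegral_congr hsplit, lintegral_finsetSum _ fun v _ => ?_]
  · exact Finset.sum_congr rfl fun v _ => (hrestr v).lintegral_comp (hsq _)
  · exact (hsq _).comp (hrestr v).measurable

/-- For monotone `μ`, the maximal constant segments `J_k` are the fibers `{i | μ i = v}`. -/
theorem monoReg_risk_at_infinity
    (η : ∀ ℓ : ℕ, (Fin ℓ → ℝ) → (Fin ℓ → ℝ))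
    (hmeas : ∀ ℓ, Measurable (η ℓ))
    (hproj : ∀ (ℓ : ℕ) (y : Fin ℓ → ℝ), η ℓ y ∈ monoCone ℓ ∧
      ∀ x ∈ monoCone ℓ, (∑ i, (y i - η ℓ y i) ^ 2) ≤ ∑ i, (y i - x i) ^ 2)
    (N : ℕ) (μ : Fin N → ℝ) (hμ : μ ∈ monoCone N) :
    Tendsto
      (fun t : ℝ =>
        ∫⁻ z, ENNReal.ofReal (∑ i, (η N (t • μ + z) i - (t • μ) i) ^ 2)
          ∂(stdGaussian N))
      atTop
      (nhds (∑ v ∈ Finset.image μ Finset.univ,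
        riskAtZero η ((Finset.univ.filter fun i => μ i = v).card))) := by
  change Tendsto _ atTop (nhds (∑ v ∈ Finset.univ.image μ, riskAtZero η (fiber μ v).card))
  rw [← lintegral_sum_sq_blockProj μ η hmeas]
  refine tendsto_lintegral_filter_of_dominated_convergence
    (fun z => ENNReal.ofReal (4 * ∑ i, z i ^ 2)) (.of_forall fun t => by fun_prop) ?_
    ((integrable_sum_sq_stdGaussian N).const_mul 4).lintegral_lt_top.ne ?_
  · filter_upwards [eventually_ge_atTop 0] with t ht
    refine .of_forall fun z => ENNReal.ofReal_le_ofReal ?_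
    simpa using IsNearestPoint.sum_sq_sub_le (hproj N (t • μ + z)) (smul_mem_monoCone hμ ht)
  · refine .of_forall fun z => tendsto_const_nhds.congr' ?_
    filter_upwards [eventually_proj_smul_add_eq η z hproj hμ] with t ht
    simp [ht]
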